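/- arXiv:1303.5509 — 2 statements merged into one kernel-verified Lean document; each statement's English description precedes it below -/
import Mathlib

section
/- Let q be a prime power and let T, U, V, W be four distinct points of ℓ∞ in PG(2,q³) that do not lie on a common order-q-subline. Then there is exactly one tangent splash of ℓ∞ with centre T that contains the points U, V and W. -/
/-!
Identify `ℓ∞ \ {T}` with `K` through `c ↦ ⟨U + c T⟩`. Writing a subplane as `π = g(PG(2,F))`,
a point `X` of `ℓ∞` lies on an extended line of `π` iff `∑ nᵢ (g⁻¹X)ᵢ = 0` for some nonzero
`n ∈ F³`. If `π` is tangent to `ℓ∞` at `T = ⟨g f₀⟩`, no such line is `ℓ∞` itself, so every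
such `n` can be normalised to `n ⬝ᵥ f₀ = 1`, and the coordinates of the splash points other than
`T` form the image of the affine plane `{n ⬝ᵥ f₀ = 1}` under an `F`-linear map. An `F`-affine
plane through `0`, `a`, `b` with `a, b` independent over `F` is `F a + F b`: the tangent splash
through `U, V = ⟨U + a T⟩, W = ⟨U + b T⟩` is determined. Independence of `a, b` is exactly the
absence of a common subline (the subline through `T, U, V` is `T` together with `F a`), and an
explicit homography produces a tangent subplane whose splash contains `U, V, W`.
-/

namespace TangentSplashPaper

open Projectivization

/-- The point set of the projective plane `PG(2,K)`. -/
abbrev PGPoint (K : Type*) [Field K] := Projectivization K (Fin 3 → K)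

/-- `ℓ` is a line of `PG(2,K)`: the set of points lying in a fixed
2-dimensional linear subspace. -/
def IsLine {K : Type*} [Field K] (ℓ : Set (PGPoint K)) : Prop :=
  ∃ W : Submodule K (Fin 3 → K), Module.finrank K W = 2 ∧
    ℓ = {P : PGPoint K | P.submodule ≤ W}

/-- The distinguished line `ℓ∞` of `PG(2,K)`: points whose last homogeneous
coordinate vanishes. -/
def linf (K : Type*) [Field K] : Set (PGPoint K) := {P : PGPoint K | P.rep 2 = 0}

/-- The homography of `PG(2,K)` induced by a linear automorphism of `K³`;
as maps of point sets, these are exactly the elements of `PGL(3,K)`. -/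
def hmap {K : Type*} [Field K] (f : (Fin 3 → K) ≃ₗ[K] (Fin 3 → K)) :
    PGPoint K → PGPoint K :=
  Projectivization.map f.toLinearMap f.injective

/-- The base subplane `PG(2,F)`: points admitting homogeneous coordinates in
the subfield `F`. -/
def basePlane (F K : Type*) [Field F] [Field K] [Algebra F K] : Set (PGPoint K) :=
  {P : PGPoint K | ∃ v : Fin 3 → K, ∃ hv : v ≠ 0, P = Projectivization.mk K v hv ∧
    ∀ i, v i ∈ (algebraMap F K).range}

/-- An order-`q`-subplane of `PG(2,K)` (`q = |F|`): an image of `PG(2,F)`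
under a homography. -/
def IsSubplane (F : Type*) {K : Type*} [Field F] [Field K] [Algebra F K]
    (S : Set (PGPoint K)) : Prop :=
  ∃ f : (Fin 3 → K) ≃ₗ[K] (Fin 3 → K), S = hmap f '' basePlane F K

/-- An order-`q`-subline of `PG(2,K)`: the intersection of an order-`q`-subplane
with a line of `PG(2,K)` meeting it in `q+1` points. -/
def IsSubline (F : Type*) {K : Type*} [Field F] [Field K] [Algebra F K] (q : ℕ)
    (b : Set (PGPoint K)) : Prop :=
  ∃ S ℓ : Set (PGPoint K), IsSubplane F S ∧ IsLine ℓ ∧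
    (S ∩ ℓ).ncard = q + 1 ∧ b = S ∩ ℓ

/-- The splash of a subplane `π` on `ℓ∞`: all points of `ℓ∞` lying on a line
of `PG(2,K)` spanned by two points of `π`. -/
def splash {K : Type*} [Field K] (π : Set (PGPoint K)) : Set (PGPoint K) :=
  {X : PGPoint K | X ∈ linf K ∧ ∃ P Q : PGPoint K, P ∈ π ∧ Q ∈ π ∧ P ≠ Q ∧
    ∃ ℓ : Set (PGPoint K), IsLine ℓ ∧ P ∈ ℓ ∧ Q ∈ ℓ ∧ X ∈ ℓ}

/-- `S` is a tangent splash of `ℓ∞` with centre `T`: `S` is the splash of some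
order-`q`-subplane meeting `ℓ∞` exactly in the point `T`. -/
def IsTangentSplash (F : Type*) {K : Type*} [Field F] [Field K] [Algebra F K]
    (S : Set (PGPoint K)) (T : PGPoint K) : Prop :=
  ∃ π : Set (PGPoint K), IsSubplane F π ∧ π ∩ linf K = {T} ∧ S = splash π

/-- The set `t_P`: points of `ℓ∞` lying on the extension of a line of the
subplane `π` through the point `P` (lines of `π` are the lines of `PG(2,K)`
meeting `π` in `q+1` points). -/
def pencilTrace {K : Type*} [Field K] (q : ℕ) (π : Set (PGPoint K))
    (P : PGPoint K) : Set (PGPoint K) :=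
  {X : PGPoint K | X ∈ linf K ∧ ∃ ℓ : Set (PGPoint K), IsLine ℓ ∧ P ∈ ℓ ∧
    (π ∩ ℓ).ncard = q + 1 ∧ X ∈ ℓ}

section LinearAlgebra

variable {F M : Type*} [Field F] [AddCommGroup M] [Module F M]

theorem finrank_ker_eq_two {φ : M →ₗ[F] F} [FiniteDimensional F M] (hM : Module.finrank F M = 3)
    (hφ : φ ≠ 0) : Module.finrank F (LinearMap.ker φ) = 2 := by
  have := Module.Dual.finrank_ker_add_one_of_ne_zero hφ
  lia

theorem span_pair_eq_of_linearIndependent [FiniteDimensional F M] {p r : M}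
    (hind : LinearIndependent F ![p, r]) {W : Submodule F M} (hW : Module.finrank F W = 2)
    (hp : p ∈ W) (hr : r ∈ W) : Submodule.span F {p, r} = W := by
  refine Submodule.eq_of_le_of_finrank_eq ?_ ?_
  · rw [Submodule.span_le, Set.insert_subset_iff, Set.singleton_subset_iff]
    exact ⟨hp, hr⟩
  · rw [hW, ← Matrix.range_cons_cons_empty p r ![], finrank_span_eq_card hind]
    simp

theorem exists_linearIndependent_pair_dotProduct_eq_zero {n : Fin 3 → F} (hn : n ≠ 0) :
    ∃ f f', LinearIndependent F ![f, f'] ∧ n ⬝ᵥ f = 0 ∧ n ⬝ᵥ f' = 0 := by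
  let W := LinearMap.ker (dotProductEquiv F (Fin 3) n)
  let b := Module.finBasisOfFinrankEq F W
    (finrank_ker_eq_two (by simp) ((dotProductEquiv F (Fin 3)).map_ne_zero_iff.mpr hn))
  refine ⟨b 0, b 1, ?_, (b 0).2, (b 1).2⟩
  have hb : ![(b 0 : Fin 3 → F), b 1] = W.subtype ∘ b := by
    ext i : 1
    fin_cases i <;> rfl
  rw [hb]
  exact b.linearIndependent.map' W.subtype W.ker_subtype

theorem exists_ne_zero_dotProduct_eq_zero (f f' : Fin 3 → F) :
    ∃ n : Fin 3 → F, n ≠ 0 ∧ n ⬝ᵥ f = 0 ∧ n ⬝ᵥ f' = 0 := by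
  let ψ := (dotProductEquiv F (Fin 3) f).prod (dotProductEquiv F (Fin 3) f')
  obtain ⟨n, hn, hn0⟩ := Submodule.exists_mem_ne_zero_of_ne_bot
    (LinearMap.ker_ne_bot_of_finrank_lt (f := ψ) (by simp))
  simp only [LinearMap.mem_ker, ψ, LinearMap.prod_apply, Function.prod, Prod.mk_eq_zero,
    dotProductEquiv_apply_apply] at hn
  exact ⟨n, hn0, by rw [dotProduct_comm, hn.1], by rw [dotProduct_comm, hn.2]⟩

theorem image_setOf_eq_one_eq_span {V : Type*} [AddCommGroup V] [Module F V]
    [FiniteDimensional F V] (hV : Module.finrank F V = 3) (A : V →ₗ[F] M)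
    {ℓ : Module.Dual F V} (hℓ : ℓ ≠ 0) {a b : M} (hab : LinearIndependent F ![a, b])
    (h0 : 0 ∈ A '' {n | ℓ n = 1}) (ha : a ∈ A '' {n | ℓ n = 1})
    (hb : b ∈ A '' {n | ℓ n = 1}) :
    A '' {n | ℓ n = 1} = Submodule.span F {a, b} := by
  obtain ⟨n₀, hn₀ : ℓ n₀ = 1, hA₀⟩ := h0
  obtain ⟨na, hna : ℓ na = 1, rfl⟩ := ha
  obtain ⟨nb, hnb : ℓ nb = 1, rfl⟩ := hb
  have hind : LinearIndependent F ![na - n₀, nb - n₀] := by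
    refine LinearIndependent.of_comp A ?_
    convert hab using 1
    ext i : 1
    fin_cases i <;> simp [hA₀]
  have hker : Submodule.span F {na - n₀, nb - n₀} = LinearMap.ker ℓ :=
    span_pair_eq_of_linearIndependent hind (finrank_ker_eq_two hV hℓ)
      (by simp [hna, hn₀]) (by simp [hnb, hn₀])
  ext c
  constructor
  · rintro ⟨n, hn : ℓ n = 1, rfl⟩
    have : n - n₀ ∈ Submodule.span F {na - n₀, nb - n₀} := by
      rw [hker, LinearMap.mem_ker, map_sub, hn, hn₀, sub_self]
    obtain ⟨s, t, hst⟩ := Submodule.mem_span_pair.mp this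
    refine Submodule.mem_span_pair.mpr ⟨s, t, ?_⟩
    rw [← sub_add_cancel n n₀, map_add, ← hst]
    simp only [map_add, map_smul, map_sub, hA₀]
    module
  · intro hc
    obtain ⟨s, t, rfl⟩ := Submodule.mem_span_pair.mp hc
    refine ⟨n₀ + s • (na - n₀) + t • (nb - n₀), ?_, ?_⟩
    · simp [hn₀, hna, hnb]
    · simp only [map_add, map_smul, map_sub, hA₀]
      module

end LinearAlgebra

section Projective

variable {K V : Type*} [Field K] [AddCommGroup V] [Module K V]

theorem map_rep_mk_eq_zero_iff {M : Type*} [AddCommGroup M] [Module K M] (φ : V →ₗ[K] M)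
    {v : V} (hv : v ≠ 0) : φ (mk K v hv).rep = 0 ↔ φ v = 0 := by
  obtain ⟨a, ha⟩ := exists_smul_eq_mk_rep K v hv
  rw [← ha, Units.smul_def, map_smul, smul_eq_zero]
  simp [a.ne_zero]

theorem mem_iff_rep_mem {P : Projectivization K V} {W : Submodule K V} :
    P.submodule ≤ W ↔ P.rep ∈ W := by
  rw [submodule_eq, Submodule.span_singleton_le_iff_mem]

theorem span_rep_pair_eq [FiniteDimensional K V] {P Q : Projectivization K V} (hPQ : P ≠ Q)
    {W : Submodule K V} (hW : Module.finrank K W = 2) (hP : P.rep ∈ W) (hQ : Q.rep ∈ W) :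
    Submodule.span K {P.rep, Q.rep} = W :=
  span_pair_eq_of_linearIndependent (linearIndependent_pair_iff_ne.mpr hPQ) hW hP hQ

end Projective

section LineCoordinate

variable {K V : Type*} [Field K] [AddCommGroup V] [Module K V] {T U : Projectivization K V}

theorem rep_add_smul_rep_ne_zero (hTU : T ≠ U) (c : K) : U.rep + c • T.rep ≠ 0 := fun h => by
  have := LinearIndependent.pair_iff.mp (linearIndependent_pair_iff_ne.mpr hTU.symm) 1 c
    (by rw [one_smul, h])
  exact one_ne_zero this.1

noncomputable def lineCoord (hTU : T ≠ U) (c : K) : Projectivization K V :=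
  mk K (U.rep + c • T.rep) (rep_add_smul_rep_ne_zero hTU c)

theorem lineCoord_zero (hTU : T ≠ U) : lineCoord hTU 0 = U := by
  simp only [lineCoord, zero_smul, add_zero, mk_rep]

theorem lineCoord_ne (hTU : T ≠ U) (c : K) : lineCoord hTU c ≠ T := fun h => by
  obtain ⟨a, ha⟩ := (mk_eq_mk_iff' K _ _ _ T.rep_nonzero).mp (h.trans T.mk_rep.symm)
  have := LinearIndependent.pair_iff.mp (linearIndependent_pair_iff_ne.mpr hTU.symm) 1 (c - a)
    (by rw [one_smul, sub_smul, ha]; abel)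
  exact one_ne_zero this.1

theorem lineCoord_injective (hTU : T ≠ U) : Function.Injective (lineCoord hTU) := by
  intro c c' h
  rw [lineCoord, lineCoord, mk_eq_mk_iff'] at h
  obtain ⟨a, ha⟩ := h
  have := LinearIndependent.pair_iff.mp (linearIndependent_pair_iff_ne.mpr hTU.symm) (a - 1)
    (a * c' - c) (by rw [← sub_eq_zero.mpr ha]; module)
  obtain ⟨h1, h2⟩ := this
  rw [sub_eq_zero.mp h1, one_mul, sub_eq_zero] at h2
  exact h2.symm

theorem lineCoord_rep_mem {W : Submodule K V} (hTU : T ≠ U) (hT : T.rep ∈ W) (hU : U.rep ∈ W)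
    (c : K) : (lineCoord hTU c).rep ∈ W := by
  obtain ⟨a, ha⟩ := exists_smul_eq_mk_rep K _ (rep_add_smul_rep_ne_zero hTU c)
  rw [lineCoord, ← ha]
  exact W.smul_of_tower_mem _ (W.add_mem hU (W.smul_mem c hT))

theorem exists_lineCoord_eq (hTU : T ≠ U) {X : Projectivization K V}
    (hX : X.rep ∈ Submodule.span K {U.rep, T.rep}) (hXT : X ≠ T) : ∃ c, X = lineCoord hTU c := by
  obtain ⟨α, β, hαβ⟩ := Submodule.mem_span_pair.mp hX
  have hα : α ≠ 0 := by
    rintro rfl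
    refine hXT ?_
    rw [← X.mk_rep, ← T.mk_rep, mk_eq_mk_iff']
    exact ⟨β, by rw [← hαβ, zero_smul, zero_add]⟩
  refine ⟨α⁻¹ * β, ?_⟩
  rw [← X.mk_rep, lineCoord, mk_eq_mk_iff']
  exact ⟨α, by rw [← hαβ, smul_add, smul_smul, mul_inv_cancel_left₀ hα]⟩

end LineCoordinate

section LineAtInfinity

variable {K : Type*} [Field K]

def linfSubspace (K : Type*) [Field K] : Submodule K (Fin 3 → K) :=
  LinearMap.ker (LinearMap.proj 2)

theorem mem_linf_iff {X : PGPoint K} : X ∈ linf K ↔ X.rep ∈ linfSubspace K := Iff.rfl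

theorem mem_linf_mk {v : Fin 3 → K} (hv : v ≠ 0) : mk K v hv ∈ linf K ↔ v 2 = 0 :=
  map_rep_mk_eq_zero_iff (LinearMap.proj 2 : (Fin 3 → K) →ₗ[K] K) hv

theorem finrank_linfSubspace : Module.finrank K (linfSubspace K) = 2 :=
  finrank_ker_eq_two (by simp) fun h => by simpa using LinearMap.congr_fun h (Pi.single 2 1)

theorem isLine_linf : IsLine (linf K) :=
  ⟨linfSubspace K, finrank_linfSubspace,
    Set.ext fun _ => (mem_iff_rep_mem (W := linfSubspace K)).symm⟩

variable {T U : PGPoint K}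

theorem span_rep_pair_eq_linfSubspace (hT : T ∈ linf K) (hU : U ∈ linf K) (hTU : T ≠ U) :
    Submodule.span K {U.rep, T.rep} = linfSubspace K :=
  span_rep_pair_eq hTU.symm finrank_linfSubspace hU hT

theorem lineCoord_mem_linf (hT : T ∈ linf K) (hU : U ∈ linf K) (hTU : T ≠ U) (c : K) :
    lineCoord hTU c ∈ linf K :=
  mem_linf_iff.mpr (lineCoord_rep_mem hTU hT hU c)

theorem exists_lineCoord_eq_of_mem_linf (hT : T ∈ linf K) (hU : U ∈ linf K) (hTU : T ≠ U)
    {X : PGPoint K} (hX : X ∈ linf K) (hXT : X ≠ T) : ∃ c, X = lineCoord hTU c :=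
  exists_lineCoord_eq hTU (by rw [span_rep_pair_eq_linfSubspace hT hU hTU]; exact hX) hXT

end LineAtInfinity

section Subplane

variable {F K : Type*} [Field F] [Field K] [Algebra F K] (g : (Fin 3 → K) ≃ₗ[K] (Fin 3 → K))

theorem algebraMap_comp_ne_zero {f : Fin 3 → F} (hf : f ≠ 0) : algebraMap F K ∘ f ≠ 0 :=
  fun h => hf (funext fun i => (algebraMap F K).injective (by simpa using congrFun h i))

noncomputable def subplanePoint {f : Fin 3 → F} (hf : f ≠ 0) : PGPoint K :=
  mk K (g (algebraMap F K ∘ f)) (g.map_ne_zero_iff.mpr (algebraMap_comp_ne_zero hf))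

theorem mem_subplane_iff {X : PGPoint K} :
    X ∈ hmap g '' basePlane F K ↔ ∃ (f : Fin 3 → F) (hf : f ≠ 0), X = subplanePoint g hf := by
  constructor
  · rintro ⟨P, ⟨v, hv, rfl, hvF⟩, rfl⟩
    choose f hf using hvF
    obtain rfl : algebraMap F K ∘ f = v := funext hf
    exact ⟨f, fun h => hv (by simp [h]), by rw [hmap, map_mk]; rfl⟩
  · rintro ⟨f, hf, rfl⟩
    refine ⟨mk K _ (algebraMap_comp_ne_zero hf), ⟨_, _, rfl, fun i => ⟨f i, rfl⟩⟩, ?_⟩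
    rw [hmap, map_mk]
    rfl

theorem subplanePoint_mem {f : Fin 3 → F} (hf : f ≠ 0) :
    subplanePoint g hf ∈ hmap g '' basePlane F K :=
  (mem_subplane_iff g).mpr ⟨f, hf, rfl⟩

theorem subplanePoint_ne {f f' : Fin 3 → F} (hind : LinearIndependent F ![f, f']) (hf : f ≠ 0)
    (hf' : f' ≠ 0) : subplanePoint g hf ≠ subplanePoint g hf' := by
  intro h
  obtain ⟨a, ha⟩ := (mk_eq_mk_iff' K _ _ _ _).mp h
  rw [← map_smul, g.injective.eq_iff] at ha
  obtain ⟨i, hi⟩ := Function.ne_iff.mp hf'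
  have hai : a * algebraMap F K (f' i) = algebraMap F K (f i) := congrFun ha i
  have haF : a = algebraMap F K (f i / f' i) := by
    rw [map_div₀, eq_div_iff (by simpa using hi), hai]
  have hff' : (f i / f' i) • f' = f := funext fun j => (algebraMap F K).injective (by
    simpa [haF, Algebra.smul_def] using congrFun ha j)
  have := LinearIndependent.pair_iff.mp hind 1 (-(f i / f' i)) (by rw [neg_smul, hff']; simp)
  exact one_ne_zero this.1

/-- The linear form on `K³` whose kernel is the extension of the line of
`hmap g '' basePlane F K` with `F`-rational line coordinates `n`. -/
noncomputable def lineForm (n : Fin 3 → F) : (Fin 3 → K) →ₗ[K] K :=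
  (Fintype.linearCombination K (algebraMap F K ∘ n)).comp g.symm.toLinearMap

theorem lineForm_apply (n : Fin 3 → F) (x : Fin 3 → K) :
    lineForm g n x = ∑ i, n i • g.symm x i := by
  simp [lineForm, Fintype.linearCombination_apply, Algebra.smul_def, mul_comm]

theorem lineForm_apply_algebraMap (n f : Fin 3 → F) :
    lineForm g n (g (algebraMap F K ∘ f)) = algebraMap F K (n ⬝ᵥ f) := by
  simp [lineForm_apply, dotProduct, Algebra.smul_def]

theorem lineForm_ne_zero {n : Fin 3 → F} (hn : n ≠ 0) : lineForm g n ≠ 0 := by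
  obtain ⟨i, hi⟩ := Function.ne_iff.mp hn
  intro h
  have := LinearMap.congr_fun h (g (algebraMap F K ∘ Pi.single i 1))
  rw [lineForm_apply_algebraMap, dotProduct_single, mul_one] at this
  exact hi (by simpa using this)

theorem finrank_ker_lineForm {n : Fin 3 → F} (hn : n ≠ 0) :
    Module.finrank K (LinearMap.ker (lineForm g n)) = 2 :=
  finrank_ker_eq_two (by simp) (lineForm_ne_zero g hn)

theorem lineForm_rep_subplanePoint (n : Fin 3 → F) {f : Fin 3 → F} (hf : f ≠ 0) :
    lineForm g n (subplanePoint g hf).rep = 0 ↔ n ⬝ᵥ f = 0 := by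
  rw [subplanePoint, map_rep_mk_eq_zero_iff, lineForm_apply_algebraMap, map_eq_zero]

end Subplane

section Splash

variable {F K : Type*} [Field F] [Field K] [Algebra F K] (g : (Fin 3 → K) ≃ₗ[K] (Fin 3 → K))

theorem exists_lineForm_eq_zero_of_mem_splash {X : PGPoint K}
    (hX : X ∈ splash (hmap g '' basePlane F K)) :
    ∃ n : Fin 3 → F, n ≠ 0 ∧ lineForm g n X.rep = 0 := by
  obtain ⟨-, P, Q, hP, hQ, hPQ, ℓ, ⟨W, hW, rfl⟩, hPℓ, hQℓ, hXℓ⟩ := hX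
  obtain ⟨f, hf, rfl⟩ := (mem_subplane_iff g).mp hP
  obtain ⟨f', hf', rfl⟩ := (mem_subplane_iff g).mp hQ
  obtain ⟨n, hn, hnf, hnf'⟩ := exists_ne_zero_dotProduct_eq_zero f f'
  have hW_le : W ≤ LinearMap.ker (lineForm g n) := by
    rw [← span_rep_pair_eq hPQ hW (mem_iff_rep_mem.mp hPℓ) (mem_iff_rep_mem.mp hQℓ),
      Submodule.span_le, Set.insert_subset_iff, Set.singleton_subset_iff]
    exact ⟨(lineForm_rep_subplanePoint g n hf).mpr hnf,
      (lineForm_rep_subplanePoint g n hf').mpr hnf'⟩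
  exact ⟨n, hn, hW_le (mem_iff_rep_mem.mp hXℓ)⟩

theorem mem_splash_of_lineForm_eq_zero {X : PGPoint K} (hX : X ∈ linf K) {n : Fin 3 → F}
    (hn : n ≠ 0) (hXn : lineForm g n X.rep = 0) : X ∈ splash (hmap g '' basePlane F K) := by
  obtain ⟨f, f', hind, hf, hf'⟩ := exists_linearIndependent_pair_dotProduct_eq_zero hn
  have hf0 : f ≠ 0 := by simpa using hind.ne_zero 0
  have hf'0 : f' ≠ 0 := by simpa using hind.ne_zero 1
  refine ⟨hX, subplanePoint g hf0, subplanePoint g hf'0, subplanePoint_mem g hf0,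
    subplanePoint_mem g hf'0, subplanePoint_ne g hind hf0 hf'0, _,
    ⟨_, finrank_ker_lineForm g hn, rfl⟩, ?_, ?_, mem_iff_rep_mem.mpr hXn⟩
  · exact mem_iff_rep_mem.mpr ((lineForm_rep_subplanePoint g n hf0).mpr hf)
  · exact mem_iff_rep_mem.mpr ((lineForm_rep_subplanePoint g n hf'0).mpr hf')

theorem mem_splash_iff {X : PGPoint K} :
    X ∈ splash (hmap g '' basePlane F K) ↔
      X ∈ linf K ∧ ∃ n : Fin 3 → F, n ≠ 0 ∧ lineForm g n X.rep = 0 :=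
  ⟨fun hX => ⟨hX.1, exists_lineForm_eq_zero_of_mem_splash g hX⟩,
    fun ⟨hX, _, hn, hXn⟩ => mem_splash_of_lineForm_eq_zero g hX hn hXn⟩

theorem mem_splash_of_mem_subplane {X : PGPoint K} (hXπ : X ∈ hmap g '' basePlane F K)
    (hX : X ∈ linf K) : X ∈ splash (hmap g '' basePlane F K) := by
  obtain ⟨f, hf, rfl⟩ := (mem_subplane_iff g).mp hXπ
  obtain ⟨n, hn, hnf, -⟩ := exists_ne_zero_dotProduct_eq_zero f f
  exact mem_splash_of_lineForm_eq_zero g hX hn ((lineForm_rep_subplanePoint g n hf).mpr hnf)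

end Splash

section Tangent

variable {F K : Type*} [Field F] [Field K] [Algebra F K]

theorem exists_ne_zero_add_mul_eq_zero_iff {V : Type*} [AddCommGroup V] [Module F V]
    (A : V →ₗ[F] K) (ℓ : V →ₗ[F] F) {κ : K} (hκ : κ ≠ 0)
    (hAℓ : ∀ n, A n = 0 → ℓ n = 0 → n = 0) (c : K) :
    (∃ n ≠ 0, A n + c * (κ * algebraMap F K (ℓ n)) = 0) ↔ c ∈ (-κ⁻¹ • A) '' {n | ℓ n = 1} := by
  constructor
  · rintro ⟨n, hn, hc⟩
    have hℓn : ℓ n ≠ 0 := fun h => hn (hAℓ n (by simpa [h] using hc) h)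
    refine ⟨(ℓ n)⁻¹ • n, by simp [hℓn], ?_⟩
    have hι : algebraMap F K (ℓ n) ≠ 0 := by simpa using hℓn
    rw [LinearMap.smul_apply, map_smul, smul_eq_mul, Algebra.smul_def, map_inv₀]
    field_simp
    linear_combination -hc
  · rintro ⟨n, hn : ℓ n = 1, rfl⟩
    refine ⟨n, fun h => by simp [h] at hn, ?_⟩
    simp only [hn, map_one, LinearMap.smul_apply, smul_eq_mul]
    field_simp
    ring

variable (g : (Fin 3 → K) ≃ₗ[K] (Fin 3 → K)) {T U : PGPoint K}

theorem not_linfSubspace_le_ker_lineForm (htan : hmap g '' basePlane F K ∩ linf K = {T})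
    {n : Fin 3 → F} (hn : n ≠ 0) : ¬ linfSubspace K ≤ LinearMap.ker (lineForm g n) := by
  intro hle
  have heq : linfSubspace K = LinearMap.ker (lineForm g n) :=
    Submodule.eq_of_le_of_finrank_eq hle
      (by rw [finrank_linfSubspace, finrank_ker_lineForm g hn])
  have hT : ∀ {f : Fin 3 → F} (hf : f ≠ 0), n ⬝ᵥ f = 0 → subplanePoint g hf = T := by
    intro f hf hnf
    have : subplanePoint g hf ∈ hmap g '' basePlane F K ∩ linf K :=
      ⟨subplanePoint_mem g hf, mem_linf_iff.mpr
        (heq ▸ (lineForm_rep_subplanePoint g n hf).mpr hnf)⟩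
    rwa [htan] at this
  obtain ⟨f, f', hind, hnf, hnf'⟩ := exists_linearIndependent_pair_dotProduct_eq_zero hn
  have hf : f ≠ 0 := by simpa using hind.ne_zero 0
  have hf' : f' ≠ 0 := by simpa using hind.ne_zero 1
  exact subplanePoint_ne g hind hf hf' ((hT hf hnf).trans (hT hf' hnf').symm)

theorem exists_lineCoord_mem_splash_iff (htan : hmap g '' basePlane F K ∩ linf K = {T})
    (hU : U ∈ linf K) (hTU : T ≠ U) :
    ∃ (A : (Fin 3 → F) →ₗ[F] K) (ℓ : Module.Dual F (Fin 3 → F)), ℓ ≠ 0 ∧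
      ∀ c, lineCoord hTU c ∈ splash (hmap g '' basePlane F K) ↔ c ∈ A '' {n | ℓ n = 1} := by
  have hTπ : T ∈ hmap g '' basePlane F K ∩ linf K := htan ▸ rfl
  obtain ⟨f₀, hf₀, hT⟩ := (mem_subplane_iff g).mp hTπ.1
  obtain ⟨κ, hκ⟩ := exists_smul_eq_mk_rep K _
    (g.map_ne_zero_iff.mpr (algebraMap_comp_ne_zero hf₀))
  have hTrep : ∀ n, lineForm g n T.rep = κ * algebraMap F K (dotProductEquiv F _ f₀ n) := by
    intro n
    rw [hT, subplanePoint, ← hκ, Units.smul_def, map_smul, lineForm_apply_algebraMap,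
      dotProductEquiv_apply_apply, dotProduct_comm, smul_eq_mul]
  let A := Fintype.linearCombination F (g.symm U.rep)
  have hUrep : ∀ n, lineForm g n U.rep = A n := fun n => by
    rw [lineForm_apply, Fintype.linearCombination_apply]
  have hAℓ : ∀ n, A n = 0 → dotProductEquiv F _ f₀ n = 0 → n = 0 := by
    intro n hAn hℓn
    by_contra hn
    refine not_linfSubspace_le_ker_lineForm g htan hn ?_
    rw [← span_rep_pair_eq_linfSubspace hTπ.2 hU hTU, Submodule.span_le,
      Set.insert_subset_iff, Set.singleton_subset_iff]
    exact ⟨(hUrep n).trans hAn, by simp [hTrep, hℓn]⟩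
  refine ⟨-(κ : K)⁻¹ • A, dotProductEquiv F _ f₀,
    (dotProductEquiv F _).map_ne_zero_iff.mpr hf₀, fun c => ?_⟩
  rw [← exists_ne_zero_add_mul_eq_zero_iff A _ κ.ne_zero hAℓ, mem_splash_iff,
    and_iff_right (lineCoord_mem_linf hTπ.2 hU hTU c)]
  simp only [lineCoord, map_rep_mk_eq_zero_iff, map_add, map_smul, smul_eq_mul, hUrep, hTrep]

theorem splash_eq_insert_lineCoord_span (htan : hmap g '' basePlane F K ∩ linf K = {T})
    (hTU : T ≠ U) {a b : K} (hab : LinearIndependent F ![a, b])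
    (hU : U ∈ splash (hmap g '' basePlane F K))
    (ha : lineCoord hTU a ∈ splash (hmap g '' basePlane F K))
    (hb : lineCoord hTU b ∈ splash (hmap g '' basePlane F K)) :
    splash (hmap g '' basePlane F K) =
      insert T (lineCoord hTU '' (Submodule.span F {a, b} : Set K)) := by
  have hTπ : T ∈ hmap g '' basePlane F K ∩ linf K := htan ▸ rfl
  obtain ⟨A, ℓ, hℓ, hC⟩ := exists_lineCoord_mem_splash_iff g htan hU.1 hTU
  have hspan : A '' {n | ℓ n = 1} = Submodule.span F {a, b} :=
    image_setOf_eq_one_eq_span (by simp) A hℓ hab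
      ((hC 0).mp (by rwa [lineCoord_zero])) ((hC a).mp ha) ((hC b).mp hb)
  ext X
  constructor
  · intro hX
    by_cases hXT : X = T
    · exact Or.inl hXT
    obtain ⟨c, rfl⟩ := exists_lineCoord_eq_of_mem_linf hTπ.2 hU.1 hTU hX.1 hXT
    exact Or.inr ⟨c, hspan ▸ (hC c).mp hX, rfl⟩
  · rintro (rfl | ⟨c, hc, rfl⟩)
    · exact mem_splash_of_mem_subplane g hTπ.1 hTπ.2
    · exact (hC c).mpr (hspan ▸ hc)

theorem IsTangentSplash.eq_insert_lineCoord_span {S : Set (PGPoint K)}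
    (hS : IsTangentSplash F S T) (hTU : T ≠ U) {a b : K} (hab : LinearIndependent F ![a, b])
    (hU : U ∈ S) (ha : lineCoord hTU a ∈ S) (hb : lineCoord hTU b ∈ S) :
    S = insert T (lineCoord hTU '' (Submodule.span F {a, b} : Set K)) := by
  obtain ⟨π, ⟨g, rfl⟩, htan, rfl⟩ := hS
  exact splash_eq_insert_lineCoord_span g htan hTU hab hU ha hb

end Tangent

section Construction

variable {K : Type*} [Field K]

theorem exists_linearEquiv_apply_eq_sum {ι : Type*} [Fintype ι] {v : ι → ι → K}
    (hv : LinearIndependent K v) : ∃ g : (ι → K) ≃ₗ[K] (ι → K), ∀ y, g y = ∑ i, y i • v i :=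
  ⟨LinearEquiv.ofInjectiveEndo _ hv.fintypeLinearCombination_injective,
    Fintype.linearCombination_apply K v⟩

variable {T U : PGPoint K}

theorem eq_zero_of_smul_rep_add_smul_rep_add_smul_single (hT : T ∈ linf K) (hU : U ∈ linf K)
    (hTU : T ≠ U) {x y z : K} (h : x • U.rep + y • T.rep + z • Pi.single 2 1 = 0) :
    x = 0 ∧ y = 0 ∧ z = 0 := by
  have hT2 : T.rep 2 = 0 := hT
  have hU2 : U.rep 2 = 0 := hU
  have hz : z = 0 := by simpa [hT2, hU2] using congrFun h 2
  rw [hz, zero_smul, add_zero] at h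
  exact ⟨(LinearIndependent.pair_iff.mp (linearIndependent_pair_iff_ne.mpr hTU.symm) _ _ h).1,
    (LinearIndependent.pair_iff.mp (linearIndependent_pair_iff_ne.mpr hTU.symm) _ _ h).2, hz⟩

end Construction

section Subline

variable {F K : Type*} [Field F] [Field K] [Algebra F K] {T U : PGPoint K}

theorem exists_subplane_inter_linf_eq (hT : T ∈ linf K) (hU : U ∈ linf K) (hTU : T ≠ U)
    {a : K} (ha : a ≠ 0) : ∃ g : (Fin 3 → K) ≃ₗ[K] (Fin 3 → K),
      hmap g '' basePlane F K ∩ linf K =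
        insert T (lineCoord hTU '' (Submodule.span F {a} : Set K)) := by
  have hind : LinearIndependent K ![U.rep, a • T.rep, Pi.single 2 1] := by
    rw [Fintype.linearIndependent_iff]
    intro c hc
    simp only [Fin.sum_univ_three, Matrix.cons_val, smul_smul] at hc
    obtain ⟨h0, h1, h2⟩ := eq_zero_of_smul_rep_add_smul_rep_add_smul_single hT hU hTU hc
    intro i
    fin_cases i
    · exact h0
    · exact (mul_eq_zero.mp h1).resolve_right ha
    · exact h2
  obtain ⟨g, hg⟩ := exists_linearEquiv_apply_eq_sum hind
  have hgf : ∀ f : Fin 3 → F, g (algebraMap F K ∘ f) = algebraMap F K (f 0) • U.rep +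
      (algebraMap F K (f 1) * a) • T.rep + algebraMap F K (f 2) • Pi.single 2 1 := by
    simp [hg, Fin.sum_univ_three, mul_smul]
  have hT2 : T.rep 2 = 0 := hT
  have hU2 : U.rep 2 = 0 := hU
  refine ⟨g, Set.ext fun X => ⟨?_, ?_⟩⟩
  · rintro ⟨hXπ, hX⟩
    obtain ⟨f, hf, rfl⟩ := (mem_subplane_iff g).mp hXπ
    have hf2 : f 2 = 0 := by
      rw [subplanePoint, mem_linf_mk, hgf] at hX
      simpa [hT2, hU2] using hX
    by_cases hf0 : f 0 = 0
    · have hf1 : f 1 ≠ 0 := fun hf1 => hf (by ext i; fin_cases i <;> simp [hf0, hf1, hf2])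
      refine Or.inl (((mk_eq_mk_iff' K _ _ _ (rep_nonzero T)).mpr
        ⟨algebraMap F K (f 1) * a, ?_⟩).trans (mk_rep T))
      rw [hgf, hf0, hf2]
      simp
    · refine Or.inr ⟨(f 1 / f 0) • a, Submodule.mem_span_singleton.mpr ⟨_, rfl⟩,
        (mk_eq_mk_iff' K _ _ _ _).mpr ⟨(algebraMap F K (f 0))⁻¹, ?_⟩⟩
      have hf0' : algebraMap F K (f 0) ≠ 0 := by simpa using hf0
      rw [hgf, hf2, map_zero, zero_smul, add_zero, smul_add, smul_smul, smul_smul,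
        inv_mul_cancel₀ hf0', one_smul]
      congr 2
      rw [Algebra.smul_def, map_div₀]
      field_simp
  · rintro (hXT | ⟨c, hc, rfl⟩)
    · rw [hXT]
      refine ⟨(mem_subplane_iff g).mpr ⟨![0, 1, 0], by simp, ?_⟩, hT⟩
      refine (mk_rep T).symm.trans ((mk_eq_mk_iff' K _ _ (rep_nonzero T) _).mpr ⟨a⁻¹, ?_⟩)
      rw [hgf]
      simp [smul_smul, ha]
    · obtain ⟨s, rfl⟩ := Submodule.mem_span_singleton.mp hc
      refine ⟨(mem_subplane_iff g).mpr ⟨![1, s, 0], by simp, ?_⟩,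
        lineCoord_mem_linf hT hU hTU _⟩
      refine (mk_eq_mk_iff' K _ _ _ _).mpr ⟨1, ?_⟩
      rw [hgf]
      simp [Algebra.smul_def]

theorem isSubline_insert_lineCoord_span [Fintype F] {q : ℕ} (hF : Fintype.card F = q)
    (hT : T ∈ linf K) (hU : U ∈ linf K) (hTU : T ≠ U) {a : K} (ha : a ≠ 0) :
    IsSubline F q (insert T (lineCoord hTU '' (Submodule.span F {a} : Set K))) := by
  obtain ⟨g, hg⟩ := exists_subplane_inter_linf_eq (F := F) hT hU hTU ha
  refine ⟨_, _, ⟨g, rfl⟩, isLine_linf, ?_, hg.symm⟩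
  have hinj : Function.Injective fun s : F => lineCoord hTU (s • a) :=
    (lineCoord_injective hTU).comp (smul_left_injective F ha)
  have hT_notMem : T ∉ Set.range fun s : F => lineCoord hTU (s • a) :=
    fun ⟨_, hs⟩ => lineCoord_ne hTU _ hs
  rw [hg, Submodule.span_singleton_eq_range, ← Set.range_comp, Function.comp_def,
    Set.ncard_insert_of_notMem hT_notMem (Set.finite_range _),
    Set.ncard_range_of_injective hinj, Nat.card_eq_fintype_card, hF]

end Subline

section Existence

variable {F K : Type*} [Field F] [Field K] [Algebra F K] {T U : PGPoint K}

theorem exists_isTangentSplash (hT : T ∈ linf K) (hU : U ∈ linf K) (hTU : T ≠ U) {a b : K}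
    (hab : LinearIndependent F ![a, b]) :
    ∃ S, IsTangentSplash F S T ∧ U ∈ S ∧ lineCoord hTU a ∈ S ∧ lineCoord hTU b ∈ S := by
  have hb : b ≠ 0 := by simpa using hab.ne_zero 1
  -- Columns chosen so that `g (c, a, b) = U + c T`; then `c` is a splash coordinate as soon as
  -- `c, a, b` are `F`-dependent, and `b ∉ F a` keeps all `F`-rational points of `ℓ∞` at `T`.
  have hind : LinearIndependent K
      ![T.rep, Pi.single 2 1, b⁻¹ • (U.rep - a • Pi.single 2 1)] := by
    rw [Fintype.linearIndependent_iff]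
    intro c hc
    simp only [Fin.sum_univ_three, Matrix.cons_val] at hc
    obtain ⟨h0, h1, h2⟩ := eq_zero_of_smul_rep_add_smul_rep_add_smul_single hT hU hTU
      (x := c 2 * b⁻¹) (y := c 0) (z := c 1 - c 2 * b⁻¹ * a) (by rw [← hc]; module)
    have hc2 : c 2 = 0 := (mul_eq_zero.mp h0).resolve_right (inv_ne_zero hb)
    intro i
    fin_cases i
    · exact h1
    · simpa [hc2] using h2
    · exact hc2
  obtain ⟨g, hg⟩ := exists_linearEquiv_apply_eq_sum hind
  have hgc : ∀ c, g ![c, a, b] = U.rep + c • T.rep := fun c => by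
    simp only [hg, Fin.sum_univ_three, Matrix.cons_val, smul_smul, mul_inv_cancel₀ hb, one_smul]
    abel
  have hsplash : ∀ c (n : Fin 3 → F), n ≠ 0 → n 0 • c + n 1 • a + n 2 • b = 0 →
      lineCoord hTU c ∈ splash (hmap g '' basePlane F K) := by
    intro c n hn h
    refine mem_splash_of_lineForm_eq_zero g (lineCoord_mem_linf hT hU hTU c) hn ?_
    rw [lineCoord, map_rep_mk_eq_zero_iff, ← hgc, lineForm_apply, g.symm_apply_apply]
    simpa [Fin.sum_univ_three] using h
  have htan : hmap g '' basePlane F K ∩ linf K = {T} := by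
    have hgf : ∀ f : Fin 3 → F, g (algebraMap F K ∘ f) = algebraMap F K (f 0) • T.rep +
        algebraMap F K (f 1) • Pi.single 2 1 +
          algebraMap F K (f 2) • b⁻¹ • (U.rep - a • Pi.single 2 1) := by
      simp [hg, Fin.sum_univ_three]
    ext X
    constructor
    · rintro ⟨hXπ, hX⟩
      obtain ⟨f, hf, rfl⟩ := (mem_subplane_iff g).mp hXπ
      have hT2 : T.rep 2 = 0 := hT
      have hU2 : U.rep 2 = 0 := hU
      have h2 : algebraMap F K (f 1) + algebraMap F K (f 2) * (b⁻¹ * -a) = 0 := by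
        rw [subplanePoint, mem_linf_mk, hgf] at hX
        simpa [hT2, hU2, Algebra.smul_def] using hX
      obtain ⟨hf2, hf1⟩ := LinearIndependent.pair_iff.mp hab (f 2) (-f 1) (by
        simp only [Algebra.smul_def, map_neg]
        field_simp at h2
        linear_combination -h2)
      refine ((mk_eq_mk_iff' K _ _ _ (rep_nonzero T)).mpr ⟨algebraMap F K (f 0), ?_⟩).trans
        (mk_rep T)
      rw [hgf, neg_eq_zero.mp hf1, hf2]
      simp
    · intro hXT
      rw [hXT]
      refine ⟨(mem_subplane_iff g).mpr ⟨![1, 0, 0], by simp, ?_⟩, hT⟩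
      refine (mk_rep T).symm.trans ((mk_eq_mk_iff' K _ _ (rep_nonzero T) _).mpr ⟨1, ?_⟩)
      rw [hgf]
      simp
  refine ⟨_, ⟨_, ⟨g, rfl⟩, htan, rfl⟩, ?_, hsplash a ![1, -1, 0] (by simp) (by simp),
    hsplash b ![1, 0, -1] (by simp) (by simp)⟩
  rw [← lineCoord_zero hTU]
  exact hsplash 0 ![1, 0, 0] (by simp) (by simp)

end Existence

theorem statement15_general (q : ℕ) (F K : Type) [Field F] [Field K] [Fintype F]
    [Algebra F K] (hF : Fintype.card F = q)
    (T U V W : PGPoint K)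
    (hT : T ∈ linf K) (hU : U ∈ linf K) (hV : V ∈ linf K) (hW : W ∈ linf K)
    (hTU : T ≠ U) (hTV : T ≠ V) (hTW : T ≠ W) (hUV : U ≠ V)
    (hnoline : ¬ ∃ b : Set (PGPoint K),
        IsSubline F q b ∧ T ∈ b ∧ U ∈ b ∧ V ∈ b ∧ W ∈ b) :
    ∃! S : Set (PGPoint K), IsTangentSplash F S T ∧ U ∈ S ∧ V ∈ S ∧ W ∈ S := by
  obtain ⟨a, rfl⟩ := exists_lineCoord_eq_of_mem_linf hT hU hTU hV hTV.symm
  obtain ⟨b, rfl⟩ := exists_lineCoord_eq_of_mem_linf hT hU hTU hW hTW.symm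
  have ha : a ≠ 0 := by
    rintro rfl
    exact hUV (lineCoord_zero hTU).symm
  have hab : LinearIndependent F ![a, b] := by
    rw [LinearIndependent.pair_iff' ha]
    rintro s rfl
    exact hnoline ⟨_, isSubline_insert_lineCoord_span hF hT hU hTU ha, Or.inl rfl,
      Or.inr ⟨0, Submodule.zero_mem _, lineCoord_zero hTU⟩,
      Or.inr ⟨a, Submodule.mem_span_singleton_self a, rfl⟩,
      Or.inr ⟨s • a, Submodule.smul_mem _ s (Submodule.mem_span_singleton_self a), rfl⟩⟩
  obtain ⟨S, hS, hUS, haS, hbS⟩ := exists_isTangentSplash hT hU hTU hab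
  refine ⟨S, ⟨hS, hUS, haS, hbS⟩, fun S' ⟨hS', hUS', haS', hbS'⟩ => ?_⟩
  rw [hS'.eq_insert_lineCoord_span hTU hab hUS' haS' hbS',
    hS.eq_insert_lineCoord_span hTU hab hUS haS hbS]

/-- four distinct points `T, U, V, W` of `ℓ∞` not on a common
order-`q`-subline lie in a unique tangent splash with centre `T`. -/
theorem statement15 (q : ℕ) (F K : Type) [Field F] [Field K] [Fintype F] [Fintype K]
    [Algebra F K] (hF : Fintype.card F = q) (hK : Fintype.card K = q ^ 3)
    (T U V W : PGPoint K)
    (hT : T ∈ linf K) (hU : U ∈ linf K) (hV : V ∈ linf K) (hW : W ∈ linf K)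
    (hTU : T ≠ U) (hTV : T ≠ V) (hTW : T ≠ W) (hUV : U ≠ V) (hUW : U ≠ W) (hVW : V ≠ W)
    (hnoline : ¬ ∃ b : Set (PGPoint K),
        IsSubline F q b ∧ T ∈ b ∧ U ∈ b ∧ V ∈ b ∧ W ∈ b) :
    ∃! S : Set (PGPoint K), IsTangentSplash F S T ∧ U ∈ S ∧ V ∈ S ∧ W ∈ S :=
  statement15_general q F K hF T U V W hT hU hV hW hTU hTV hTW hUV hnoline

end TangentSplashPaper
end

section
/- Let q be a prime power and let S be a tangent splash of ℓ∞ in PG(2,q³) whose centre is the point T = (1,0,0). Identify ℓ∞ \ {T} with GF(q³) via (x,1,0) ↦ x. Then S \ {T} is a coset of a 2-dimensional GF(q)-subspace of GF(q³); equivalently, there exist L ∈ GF(q³) \ {0} and φ ∈ GF(q) such that S \ {T} = { x ∈ GF(q³) : Lx + L^q x^q + L^{q²} x^{q²} + φ = 0 }, i.e. S is a Sherk surface S(0,0,L,φ) of size q²+1. -/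
namespace TangentSplashPaper

open Projectivization

/-- `![x, 1, 0]` is a nonzero vector. -/
lemma vec_x10_ne_zero {K : Type*} [Field K] (x : K) : ![x, (1 : K), 0] ≠ 0 := by
  intro h
  have h1 := congrFun h 1
  simp at h1

/-- `![1, 0, 0]` is a nonzero vector. -/
lemma vec_100_ne_zero {K : Type*} [Field K] : ![(1 : K), 0, 0] ≠ 0 := by
  intro h
  have h0 := congrFun h 0
  simp at h0

/-!
Write `π = f(PG(2,q))`, `ι : GF(q)³ → GF(q³)³` for the inclusion, `u₀ = f⁻¹(1,0,0)` and
`u₁ = f⁻¹(0,1,0)`. A plane of `GF(q³)³` is spanned by two independent rational vectors iff it is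
the kernel of `ι a ⬝ᵥ ·` for some rational `a ≠ 0` (the cross product gives `a`), so `(x,1,0)`
lies in the splash iff `ι a ⬝ᵥ (x u₀ + u₁) = 0` for some such `a`. Since `T ∈ π`, `u₀ = c · ι p₀`
with `p₀` rational, and since `T` is the only point of `π` on `ℓ∞`, no rational `a ≠ 0` kills both
`u₀` and `u₁`. The condition becomes `(a ⬝ᵥ p₀) x + c⁻¹ (ι a ⬝ᵥ u₁) = 0`; normalising
`a ⬝ᵥ p₀ = 1`, the splash is the image of an affine plane of `GF(q)³` under an injective affine
map into `GF(q³)`, a coset of a 2-dimensional subspace `W`. Nondegeneracy of the trace form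
gives `W = ker Tr(L ·)`, and `Tr y = y + y^q + y^{q²}` turns this into the Sherk equation.
-/

open Module Matrix Submodule

section CrossProduct
variable {R S : Type*} [CommRing R] [CommRing S]

lemma comp_crossProduct (f : R →+* S) (v w : Fin 3 → R) :
    f ∘ (v ⨯₃ w) = (f ∘ v) ⨯₃ (f ∘ w) := by
  ext i; fin_cases i <;> simp [cross_apply]

lemma crossProduct_dotProduct_eq_zero_of_mem_span {u u' w : Fin 3 → R}
    (hw : w ∈ span R (Set.range ![u, u'])) : (u ⨯₃ u') ⬝ᵥ w = 0 := by
  induction hw using Submodule.span_induction with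
  | mem x hx =>
    obtain ⟨i, rfl⟩ := hx
    fin_cases i <;> simp [dotProduct_comm]
  | zero => simp
  | add x y _ _ hx hy => simp [dotProduct_add, hx, hy]
  | smul r x _ hx => simp [dotProduct_smul, hx]

end CrossProduct

section LinearAlgebra
variable {K V V' : Type*} [Field K] [AddCommGroup V] [Module K V] [AddCommGroup V'] [Module K V']

lemma linearIndependent_pair_map_iff (e : V ≃ₗ[K] V') (u u' : V) :
    LinearIndependent K ![e u, e u'] ↔ LinearIndependent K ![u, u'] := by
  rw [← e.toLinearMap.linearIndependent_iff_of_injOn e.injective.injOn]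
  congr!
  ext i; fin_cases i <;> rfl

lemma mem_span_pair_map_iff (e : V ≃ₗ[K] V') (u u' : V) (y : V') :
    y ∈ span K (Set.range ![e u, e u']) ↔ e.symm y ∈ span K (Set.range ![u, u']) := by
  have hrange : Set.range ![e u, e u'] = e '' Set.range ![u, u'] := by
    rw [← Set.range_comp]; congr!; ext i; fin_cases i <;> rfl
  rw [hrange, ← LinearEquiv.coe_toLinearMap, Submodule.span_image, Submodule.mem_map_equiv]

lemma finrank_span_pair {u u' : V} (h : LinearIndependent K ![u, u']) :
    finrank K (span K (Set.range ![u, u'])) = 2 := by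
  simpa using finrank_span_eq_card h

lemma finrank_ker_dotProductEquiv {a : Fin 3 → K} (ha : a ≠ 0) :
    finrank K (LinearMap.ker (dotProductEquiv K (Fin 3) a)) = 2 := by
  have := Dual.finrank_ker_add_one_of_ne_zero ((dotProductEquiv K (Fin 3)).map_ne_zero_iff.mpr ha)
  rw [finrank_fin_fun] at this
  omega

end LinearAlgebra

lemma exists_coset_eq_setOf_exists_ne_zero {F K V : Type*} [Field F] [Field K] [Algebra F K]
    [AddCommGroup V] [Module F V] [FiniteDimensional F V]
    {α : Dual F V} (hα : α ≠ 0) (β : V →ₗ[F] K)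
    (hαβ : ∀ a, α a = 0 → β a = 0 → a = 0) :
    ∃ W : Submodule F K, finrank F W + 1 = finrank F V ∧ ∃ c : K,
      {x : K | ∃ a ≠ 0, algebraMap F K (α a) * x + β a = 0} = (fun w => c + w) '' (W : Set K) := by
  have hinj : Function.Injective (β ∘ₗ (LinearMap.ker α).subtype) := by
    rw [← LinearMap.ker_eq_bot, LinearMap.ker_eq_bot']
    rintro ⟨a, ha⟩ hβa
    simpa using hαβ a ha hβa
  refine ⟨LinearMap.range (β ∘ₗ (LinearMap.ker α).subtype), ?_, ?_⟩
  · rw [LinearMap.finrank_range_of_inj hinj, Dual.finrank_ker_add_one_of_ne_zero hα]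
  obtain ⟨a₀, ha₀⟩ := α.surjective hα 1
  refine ⟨-β a₀, Set.ext fun x => ⟨?_, ?_⟩⟩
  · rintro ⟨a, ha, hax⟩
    have hαa : α a ≠ 0 := fun h => ha (hαβ a h (by simpa [h] using hax))
    have hk : a₀ - (α a)⁻¹ • a ∈ LinearMap.ker α := by
      rw [LinearMap.mem_ker, map_sub, map_smul, ha₀, smul_eq_mul, inv_mul_cancel₀ hαa, sub_self]
    refine ⟨_, ⟨⟨_, hk⟩, rfl⟩, ?_⟩
    · have hαa' : algebraMap F K (α a) ≠ 0 := by simpa using hαa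
      simp only [LinearMap.comp_apply, Submodule.subtype_apply, map_sub, map_smul,
        Algebra.smul_def, map_inv₀]
      field_simp
      linear_combination -hax
  · rintro ⟨_, ⟨⟨k, hk⟩, rfl⟩, rfl⟩
    have hαk : α k = 0 := hk
    refine ⟨a₀ - k, fun h => by rw [← sub_eq_zero.mp h, ha₀] at hαk; exact one_ne_zero hαk, ?_⟩
    simp [ha₀, hαk]

lemma exists_trace_mul_eq_zero_iff_mem {F K : Type*} [Field F] [Field K] [Algebra F K]
    [FiniteDimensional F K] [Algebra.IsSeparable F K] (W : Submodule F K)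
    (hW : finrank F W + 1 = finrank F K) :
    ∃ L : K, L ≠ 0 ∧ ∀ x, x ∈ W ↔ Algebra.trace F K (L * x) = 0 := by
  obtain ⟨g, hg, hWg⟩ := W.exists_le_ker_of_lt_top
    (Submodule.lt_top_of_finrank_lt_finrank (by omega))
  have hWeq : W = LinearMap.ker g :=
    Submodule.eq_of_le_of_finrank_eq hWg (by rw [← Nat.add_right_cancel_iff (n := 1), hW,
      Module.Dual.finrank_ker_add_one_of_ne_zero hg])
  set B := Algebra.traceForm F K
  refine ⟨(B.toDual (traceForm_nondegenerate F K)).symm g, by simpa using hg, fun x => ?_⟩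
  rw [hWeq, LinearMap.mem_ker, ← Algebra.traceForm_apply,
    LinearMap.BilinForm.apply_toDual_symm_apply]

lemma exists_trace_mul_add_eq_zero_iff_mem_coset {F K : Type*} [Field F] [Field K] [Algebra F K]
    [FiniteDimensional F K] [Algebra.IsSeparable F K] (W : Submodule F K)
    (hW : finrank F W + 1 = finrank F K) (c : K) :
    ∃ L : K, L ≠ 0 ∧ ∃ φ : F, ∀ x,
      x ∈ (fun w => c + w) '' (W : Set K) ↔ Algebra.trace F K (L * x) + φ = 0 := by
  obtain ⟨L, hL, hWL⟩ := exists_trace_mul_eq_zero_iff_mem W hW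
  refine ⟨L, hL, -Algebra.trace F K (L * c), fun x => ?_⟩
  rw [Set.image_add_left, Set.mem_preimage, SetLike.mem_coe, hWL, mul_add, map_add, mul_neg,
    map_neg, neg_add_eq_sub, sub_eq_add_neg]

lemma algebraMap_trace_eq_add_pow {F K : Type*} [Field F] [Field K] [Fintype F] [Finite K]
    [Algebra F K] {q : ℕ} (hF : Fintype.card F = q) (hdeg : finrank F K = 3) (y : K) :
    algebraMap F K (Algebra.trace F K y) = y + y ^ q + y ^ q ^ 2 := by
  rw [FiniteField.algebraMap_trace_eq_sum_pow, hdeg, Nat.card_eq_fintype_card, hF]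
  simp [Finset.sum_range_succ]

section RationalPlanes
variable {F K : Type*} [Field F] [Field K] [Algebra F K]

lemma exists_span_eq_ker_dotProductEquiv {a : Fin 3 → F} (ha : a ≠ 0) :
    ∃ v v' : Fin 3 → F, LinearIndependent K ![algebraMap F K ∘ v, algebraMap F K ∘ v'] ∧
      span K (Set.range ![algebraMap F K ∘ v, algebraMap F K ∘ v']) =
        LinearMap.ker (dotProductEquiv K (Fin 3) (algebraMap F K ∘ a)) := by
  set N := LinearMap.ker (dotProductEquiv F (Fin 3) a)
  let b := Module.finBasisOfFinrankEq F N (finrank_ker_dotProductEquiv ha)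
  have hF : LinearIndependent F ![(b 0 : Fin 3 → F), b 1] := by
    have he : N.subtype ∘ b = ![(b 0 : Fin 3 → F), b 1] := by
      ext i : 1; fin_cases i <;> rfl
    simpa only [he] using b.linearIndependent.map' N.subtype N.ker_subtype
  have hK : LinearIndependent K
      ![algebraMap F K ∘ (b 0 : Fin 3 → F), algebraMap F K ∘ (b 1 : Fin 3 → F)] := by
    rw [← crossProduct_ne_zero_iff_linearIndependent, ← comp_crossProduct]
    intro h
    apply crossProduct_ne_zero_iff_linearIndependent.mpr hF
    ext i
    simpa using congrFun h i
  have haK : algebraMap F K ∘ a ≠ 0 := fun h => ha (funext fun i => by simpa using congrFun h i)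
  refine ⟨b 0, b 1, hK, eq_of_le_of_finrank_eq ?_ ?_⟩
  · rw [span_le]
    rintro _ ⟨i, rfl⟩
    have h0 : a ⬝ᵥ (b 0 : Fin 3 → F) = 0 := (b 0).2
    have h1 : a ⬝ᵥ (b 1 : Fin 3 → F) = 0 := (b 1).2
    fin_cases i <;> simp [← RingHom.map_dotProduct, h0, h1]
  · rw [finrank_span_pair hK, finrank_ker_dotProductEquiv haK]

lemma exists_rational_pair_mem_span_iff (w : Fin 3 → K) :
    (∃ v v' : Fin 3 → F, LinearIndependent K ![algebraMap F K ∘ v, algebraMap F K ∘ v'] ∧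
      w ∈ span K (Set.range ![algebraMap F K ∘ v, algebraMap F K ∘ v'])) ↔
    ∃ a : Fin 3 → F, a ≠ 0 ∧ (algebraMap F K ∘ a) ⬝ᵥ w = 0 := by
  constructor
  · rintro ⟨v, v', hind, hw⟩
    refine ⟨v ⨯₃ v', fun h => ?_, ?_⟩
    · apply crossProduct_ne_zero_iff_linearIndependent.mpr hind
      rw [← comp_crossProduct, h]
      ext; simp
    · rw [comp_crossProduct]
      exact crossProduct_dotProduct_eq_zero_of_mem_span hw
  · rintro ⟨a, ha, haw⟩
    obtain ⟨v, v', hind, hspan⟩ := exists_span_eq_ker_dotProductEquiv (K := K) ha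
    exact ⟨v, v', hind, hspan ▸ haw⟩

end RationalPlanes

section Projective
variable {K : Type*} [Field K]

lemma mk_mem_linf_iff {y : Fin 3 → K} (hy : y ≠ 0) : mk K y hy ∈ linf K ↔ y 2 = 0 := by
  obtain ⟨a, ha⟩ := exists_smul_eq_mk_rep K y hy
  simp only [linf, Set.mem_ofPred_eq, ← ha, Pi.smul_apply, Units.smul_def, smul_eq_mul,
    mul_eq_zero, a.ne_zero, false_or]

lemma mk_ne_mk_iff {u u' : Fin 3 → K} (hu : u ≠ 0) (hu' : u' ≠ 0) :
    mk K u hu ≠ mk K u' hu' ↔ LinearIndependent K ![u, u'] :=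
  (independent_pair_iff_ne _ _).symm.trans (independent_mk_iff_LinearIndependent hu hu')

lemma exists_line_iff_mem_span {u u' y : Fin 3 → K} (hu : u ≠ 0) (hu' : u' ≠ 0) (hy : y ≠ 0)
    (h : LinearIndependent K ![u, u']) :
    (∃ ℓ, IsLine ℓ ∧ mk K u hu ∈ ℓ ∧ mk K u' hu' ∈ ℓ ∧ mk K y hy ∈ ℓ) ↔
      y ∈ span K (Set.range ![u, u']) := by
  have hmem (W : Submodule K (Fin 3 → K)) (z : Fin 3 → K) (hz : z ≠ 0) :
      mk K z hz ∈ {P : PGPoint K | P.submodule ≤ W} ↔ z ∈ W := by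
    rw [Set.mem_ofPred_eq, submodule_mk, span_singleton_le_iff_mem]
  constructor
  · rintro ⟨_, ⟨W, hW, rfl⟩, hP, hQ, hX⟩
    rw [hmem] at hP hQ hX
    have hle : span K (Set.range ![u, u']) ≤ W := by
      rw [span_le]
      rintro _ ⟨i, rfl⟩
      fin_cases i <;> assumption
    rwa [eq_of_le_of_finrank_eq hle (by rw [finrank_span_pair h, hW])]
  · intro hyW
    refine ⟨_, ⟨_, finrank_span_pair h, rfl⟩, ?_, ?_, ?_⟩ <;> rw [hmem]
    · exact subset_span ⟨0, rfl⟩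
    · exact subset_span ⟨1, rfl⟩
    · exact hyW

end Projective

section Subplane
variable {F K : Type*} [Field F] [Field K] [Algebra F K] (f : (Fin 3 → K) ≃ₗ[K] (Fin 3 → K))

lemma mem_hmap_basePlane_iff {P : PGPoint K} :
    P ∈ hmap f '' basePlane F K ↔
      ∃ (v : Fin 3 → F) (hv : f (algebraMap F K ∘ v) ≠ 0), mk K _ hv = P := by
  constructor
  · rintro ⟨_, ⟨r, hr, rfl, hrat⟩, rfl⟩
    choose v hv using hrat
    obtain rfl : algebraMap F K ∘ v = r := funext hv
    exact ⟨v, f.map_ne_zero_iff.mpr hr, map_mk _ f.injective _ hr⟩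
  · rintro ⟨v, hv, rfl⟩
    have hv' : algebraMap F K ∘ v ≠ 0 := f.map_ne_zero_iff.mp hv
    exact ⟨mk K _ hv', ⟨_, hv', rfl, fun i => ⟨v i, rfl⟩⟩, map_mk _ f.injective _ hv'⟩

lemma mk_mem_splash_iff {y : Fin 3 → K} (hy : y ≠ 0) :
    mk K y hy ∈ splash (hmap f '' basePlane F K) ↔
      y 2 = 0 ∧ ∃ a : Fin 3 → F, a ≠ 0 ∧ (algebraMap F K ∘ a) ⬝ᵥ f.symm y = 0 := by
  rw [← exists_rational_pair_mem_span_iff, splash, Set.mem_ofPred_eq, mk_mem_linf_iff]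
  refine and_congr_right fun _ => ⟨?_, ?_⟩
  · rintro ⟨P, Q, hP, hQ, hPQ, hline⟩
    obtain ⟨v, hv, rfl⟩ := (mem_hmap_basePlane_iff f).mp hP
    obtain ⟨v', hv', rfl⟩ := (mem_hmap_basePlane_iff f).mp hQ
    have hind := (mk_ne_mk_iff hv hv').mp hPQ
    refine ⟨v, v', (linearIndependent_pair_map_iff f _ _).mp hind, ?_⟩
    rw [← mem_span_pair_map_iff]
    exact (exists_line_iff_mem_span hv hv' hy hind).mp hline
  · rintro ⟨v, v', hind, hw⟩
    have hind' := (linearIndependent_pair_map_iff f _ _).mpr hind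
    have hv := hind'.ne_zero 0
    have hv' := hind'.ne_zero 1
    simp only [Matrix.cons_val_zero, Matrix.cons_val_one] at hv hv'
    exact ⟨_, _, (mem_hmap_basePlane_iff f).mpr ⟨v, hv, rfl⟩,
      (mem_hmap_basePlane_iff f).mpr ⟨v', hv', rfl⟩, (mk_ne_mk_iff hv hv').mpr hind',
      (exists_line_iff_mem_span hv hv' hy hind').mpr ((mem_span_pair_map_iff f _ _ _).mpr hw)⟩

end Subplane

section Tangent
variable {F K : Type*} [Field F] [Field K] [Algebra F K] {f : (Fin 3 → K) ≃ₗ[K] (Fin 3 → K)}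
  (htan : hmap f '' basePlane F K ∩ linf K = {mk K ![1, 0, 0] vec_100_ne_zero})
include htan

lemma exists_centre_eq_smul_rational :
    ∃ (p₀ : Fin 3 → F) (c : K), c ≠ 0 ∧ f.symm ![1, 0, 0] = c • (algebraMap F K ∘ p₀) := by
  have hT : mk K ![(1 : K), 0, 0] vec_100_ne_zero ∈ hmap f '' basePlane F K ∩ linf K := by
    rw [htan]; rfl
  obtain ⟨v, hv, hvT⟩ := (mem_hmap_basePlane_iff f).mp hT.1
  obtain ⟨a, ha⟩ := (mk_eq_mk_iff' K _ _ _ _).mp hvT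
  have ha0 : a ≠ 0 := by
    rintro rfl
    exact hv (by rw [← ha, zero_smul])
  refine ⟨v, a⁻¹, inv_ne_zero ha0, ?_⟩
  rw [← f.symm_apply_apply (algebraMap F K ∘ v), ← ha, map_smul, smul_smul,
    inv_mul_cancel₀ ha0, one_smul]

lemma mk_eq_centre_of_mem_span {v : Fin 3 → F} (hv : f (algebraMap F K ∘ v) ≠ 0)
    (hspan : algebraMap F K ∘ v ∈ span K (Set.range ![f.symm ![1, 0, 0], f.symm ![0, 1, 0]])) :
    mk K _ hv = mk K ![1, 0, 0] vec_100_ne_zero := by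
  rw [mem_span_pair_map_iff, LinearEquiv.symm_symm] at hspan
  have hlinf : span K (Set.range ![(![1, 0, 0] : Fin 3 → K), ![0, 1, 0]]) ≤
      LinearMap.ker (LinearMap.proj 2) := by
    rw [span_le]
    rintro _ ⟨i, rfl⟩
    fin_cases i <;> simp
  have hmem : mk K _ hv ∈ hmap f '' basePlane F K ∩ linf K :=
    ⟨(mem_hmap_basePlane_iff f).mpr ⟨v, hv, rfl⟩, (mk_mem_linf_iff hv).mpr (hlinf hspan)⟩
  rwa [htan] at hmem

/-- A rational plane through `f⁻¹(1,0,0)` and `f⁻¹(0,1,0)` is the preimage of `ℓ∞`, so it would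
put two distinct points of the subplane on `ℓ∞`. -/
lemma eq_zero_of_dotProduct_centre_eq_zero {a : Fin 3 → F}
    (h₀ : (algebraMap F K ∘ a) ⬝ᵥ f.symm ![1, 0, 0] = 0)
    (h₁ : (algebraMap F K ∘ a) ⬝ᵥ f.symm ![0, 1, 0] = 0) : a = 0 := by
  by_contra ha
  obtain ⟨v, v', hind, hspan⟩ := exists_span_eq_ker_dotProductEquiv (K := K) ha
  have hU : LinearIndependent K ![f.symm ![1, 0, 0], f.symm ![0, 1, 0]] := by
    rw [linearIndependent_pair_map_iff, LinearIndependent.pair_iff]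
    intro s t hst
    exact ⟨by simpa using congrFun hst 0, by simpa using congrFun hst 1⟩
  have heq : span K (Set.range ![f.symm ![1, 0, 0], f.symm ![0, 1, 0]]) =
      span K (Set.range ![algebraMap F K ∘ v, algebraMap F K ∘ v']) := by
    refine eq_of_le_of_finrank_eq ?_ (by rw [finrank_span_pair hU, finrank_span_pair hind])
    rw [hspan, span_le]
    rintro _ ⟨i, rfl⟩
    fin_cases i <;> simpa
  have hind' := (linearIndependent_pair_map_iff f _ _).mpr hind
  have hv := hind'.ne_zero 0
  have hv' := hind'.ne_zero 1
  simp only [Matrix.cons_val_zero, Matrix.cons_val_one] at hv hv'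
  refine (mk_ne_mk_iff hv hv').mpr hind' ?_
  rw [mk_eq_centre_of_mem_span htan hv (heq ▸ subset_span ⟨0, rfl⟩),
    mk_eq_centre_of_mem_span htan hv' (heq ▸ subset_span ⟨1, rfl⟩)]

theorem exists_coset_eq_splash :
    ∃ W : Submodule F K, finrank F W = 2 ∧ ∃ c : K,
      {x : K | mk K ![x, 1, 0] (vec_x10_ne_zero x) ∈ splash (hmap f '' basePlane F K)} =
        (fun w => c + w) '' (W : Set K) := by
  obtain ⟨p₀, c, hc, hu₀⟩ := exists_centre_eq_smul_rational htan
  have hp₀ : p₀ ≠ 0 := by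
    rintro rfl
    have : f.symm ![(1 : K), 0, 0] = 0 := by rw [hu₀]; ext i; simp
    exact vec_100_ne_zero (f.symm.map_eq_zero_iff.mp this)
  set u₁ := f.symm ![0, 1, 0]
  let α : Dual F (Fin 3 → F) := dotProductEquiv F (Fin 3) p₀
  let β : (Fin 3 → F) →ₗ[F] K := c⁻¹ • ((dotProductEquiv K (Fin 3) u₁).restrictScalars F ∘ₗ
    (Algebra.linearMap F K).compLeft (Fin 3))
  have hβ (a : Fin 3 → F) : c * β a = (algebraMap F K ∘ a) ⬝ᵥ u₁ := by
    change c * (c⁻¹ * (u₁ ⬝ᵥ (algebraMap F K ∘ a))) = _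
    rw [mul_inv_cancel_left₀ hc, dotProduct_comm]
  have hα (a : Fin 3 → F) :
      c * algebraMap F K (α a) = (algebraMap F K ∘ a) ⬝ᵥ f.symm ![1, 0, 0] := by
    simp [α, hu₀, RingHom.map_dotProduct, dotProduct_comm (algebraMap F K ∘ p₀)]
  have hdot (x : K) (a : Fin 3 → F) :
      (algebraMap F K ∘ a) ⬝ᵥ f.symm ![x, 1, 0] = c * (algebraMap F K (α a) * x + β a) := by
    have hsplit : f.symm ![x, 1, 0] = x • f.symm ![1, 0, 0] + u₁ := by
      rw [← map_smul, ← map_add]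
      congr 1
      ext i; fin_cases i <;> simp
    rw [hsplit, dotProduct_add, dotProduct_smul, ← hα, ← hβ, smul_eq_mul]
    ring
  obtain ⟨W, hW, c', hc'⟩ := exists_coset_eq_setOf_exists_ne_zero
    (α := α) (by simpa [α] using hp₀) β fun a hαa hβa =>
      eq_zero_of_dotProduct_centre_eq_zero htan (by rw [← hα, hαa]; simp)
        (by rw [← hβ, hβa, mul_zero])
  refine ⟨W, by simpa using hW, c', ?_⟩
  rw [← hc']
  ext x
  simp [mk_mem_splash_iff, hdot, hc]

end Tangent

/-- a tangent splash `S` of `ℓ∞` with centre `T = (1,0,0)`, with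
`ℓ∞ \ {T}` identified with `GF(q³)` via `(x,1,0) ↦ x`, satisfies: `S \ {T}` is a coset
of a 2-dimensional `GF(q)`-subspace of `GF(q³)`; equivalently, there are `L ∈ GF(q³) \ {0}`
and `φ ∈ GF(q)` with `S \ {T} = {x : Lx + L^q x^q + L^{q²} x^{q²} + φ = 0}`;
i.e. `S` is a Sherk surface `S(0,0,L,φ)` of size `q²+1`. -/
theorem statement18 (q : ℕ) (F K : Type) [Field F] [Field K] [Fintype F] [Fintype K]
    [Algebra F K] (hF : Fintype.card F = q) (hK : Fintype.card K = q ^ 3)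
    (S : Set (PGPoint K))
    (hS : IsTangentSplash F S (Projectivization.mk K ![1, 0, 0] vec_100_ne_zero)) :
    (∃ L : K, L ≠ 0 ∧ ∃ φ : F, ∀ x : K,
        Projectivization.mk K ![x, 1, 0] (vec_x10_ne_zero x) ∈ S ↔
          L * x + L ^ q * x ^ q + L ^ q ^ 2 * x ^ q ^ 2 + algebraMap F K φ = 0) ∧
    (∃ W : Submodule F K, Module.finrank F W = 2 ∧ ∃ c : K,
        {x : K | Projectivization.mk K ![x, 1, 0] (vec_x10_ne_zero x) ∈ S} =
          (fun w => c + w) '' (W : Set K)) := by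
  obtain ⟨π, ⟨f, rfl⟩, htan, rfl⟩ := hS
  have hdeg : finrank F K = 3 := by
    rw [Module.card_eq_pow_finrank (K := F), hF] at hK
    exact Nat.pow_right_injective (hF ▸ Fintype.one_lt_card) hK
  obtain ⟨W, hW, c, hcoset⟩ := exists_coset_eq_splash htan
  obtain ⟨L, hL, φ, hLφ⟩ := exists_trace_mul_add_eq_zero_iff_mem_coset W (by omega) c
  refine ⟨⟨L, hL, φ, fun x => ?_⟩, W, hW, c, hcoset⟩
  rw [← mul_pow, ← mul_pow, ← algebraMap_trace_eq_add_pow hF hdeg, ← map_add,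
    map_eq_zero_iff _ (algebraMap F K).injective, ← hLφ, ← hcoset, Set.mem_ofPred_eq]

end TangentSplashPaper
end
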